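/- arXiv:2311.16925 — 3 statements merged into one kernel-verified Lean document; each statement's English description precedes it below -/
import Mathlib

section
/- The square of W_a has entries (W_a²)_{g,h} = ∏_{i=1}^n m_i·(δ_{g_i,0}·δ_{h_i,0} + (1 - δ_{g_i,0})·(1 - δ_{h_i,0})·(m_i·δ_{g_i,h_i} - 1)). -/
/-!
`W_a` is the Kronecker product over the loci of the one-locus matrices `J - m·P`, where `J` is the
all-ones matrix and `P` the diagonal projection onto the nonzero alleles. Kronecker products
multiply factorwise, so `W_a²` is the Kronecker product of the squares
`(J - m·P)² = m·J - m·(P·J + J·P) + m²·P`, whose entries are the factors of the claimed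
product.
-/

def wronOmega {m : ℕ} [NeZero m] (x y : Fin m) : ℤ :=
  if x ≠ 0 ∧ x = y then 1 else 0

def kdel {m : ℕ} (x y : Fin m) : ℤ := if x = y then 1 else 0

def Wa {n : ℕ} (m : Fin n → ℕ) [∀ i, NeZero (m i)] :
    Matrix (∀ i, Fin (m i)) (∀ i, Fin (m i)) ℤ :=
  fun g h => ∏ i, (1 - (m i : ℤ) * wronOmega (g i) (h i))

open Finset

namespace Matrix

variable {ι R : Type*} [Fintype ι] [CommSemiring R] {κ μ ν : ι → Type*}

def piKron (A : ∀ i, Matrix (κ i) (μ i) R) : Matrix (∀ i, κ i) (∀ i, μ i) R :=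
  of fun g h => ∏ i, A i (g i) (h i)

theorem piKron_apply (A : ∀ i, Matrix (κ i) (μ i) R) (g : ∀ i, κ i) (h : ∀ i, μ i) :
    piKron A g h = ∏ i, A i (g i) (h i) :=
  rfl

theorem piKron_mul_piKron [DecidableEq ι] [∀ i, Fintype (μ i)]
    (A : ∀ i, Matrix (κ i) (μ i) R) (B : ∀ i, Matrix (μ i) (ν i) R) :
    piKron A * piKron B = piKron fun i => A i * B i := by
  ext g h
  simp only [piKron_apply, mul_apply, ← prod_mul_distrib]
  exact (Fintype.prod_sum fun i x => A i (g i) x * B i x (h i)).symm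

end Matrix

section OneLocus

variable {M : ℕ}

theorem sum_kdel_left (a : Fin M) : ∑ x, kdel a x = 1 := by
  simp [kdel]

theorem sum_kdel_right (b : Fin M) : ∑ x, kdel x b = 1 := by
  simp [kdel]

theorem sum_kdel_mul_kdel (a b : Fin M) : ∑ x, kdel a x * kdel x b = kdel a b := by
  simp [kdel]

variable [NeZero M]

theorem wronOmega_eq_mul_kdel_left (a x : Fin M) :
    wronOmega a x = (1 - kdel a 0) * kdel a x := by
  by_cases ha : a = 0 <;> simp [wronOmega, kdel, ha]

theorem wronOmega_eq_mul_kdel_right (x b : Fin M) :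
    wronOmega x b = (1 - kdel b 0) * kdel x b := by
  by_cases hb : b = 0 <;> by_cases hxb : x = b <;> simp_all [wronOmega, kdel]

def waLocus (M : ℕ) [NeZero M] : Matrix (Fin M) (Fin M) ℤ :=
  fun a b => 1 - (M : ℤ) * wronOmega a b

theorem waLocus_mul_self_apply (a b : Fin M) :
    (waLocus M * waLocus M) a b = (M : ℤ) * (kdel a 0 * kdel b 0 +
      (1 - kdel a 0) * (1 - kdel b 0) * ((M : ℤ) * kdel a b - 1)) := by
  set α := 1 - kdel a 0
  set β := 1 - kdel b 0
  have expand : ∀ x, waLocus M a x * waLocus M x b =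
      1 - M * α * kdel a x - M * β * kdel x b + M ^ 2 * α * β * (kdel a x * kdel x b) := by
    intro x
    rw [waLocus, waLocus, wronOmega_eq_mul_kdel_left, wronOmega_eq_mul_kdel_right]
    ring
  rw [Matrix.mul_apply, sum_congr rfl fun x _ => expand x]
  simp only [sum_add_distrib, sum_sub_distrib, ← mul_sum, sum_kdel_left, sum_kdel_right,
    sum_kdel_mul_kdel, sum_const, card_univ, Fintype.card_fin, nsmul_eq_mul, mul_one]
  ring

end OneLocus

theorem Wa_sq_entries {n : ℕ} (m : Fin n → ℕ) [∀ i, NeZero (m i)]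
    (g h : ∀ i, Fin (m i)) :
    (Wa m * Wa m) g h = ∏ i, (m i : ℤ) * (kdel (g i) 0 * kdel (h i) 0 +
      (1 - kdel (g i) 0) * (1 - kdel (h i) 0) * ((m i : ℤ) * kdel (g i) (h i) - 1)) := by
  have hWa : Wa m = Matrix.piKron fun i => waLocus (m i) := rfl
  rw [hWa, Matrix.piKron_mul_piKron, Matrix.piKron_apply]
  exact prod_congr rfl fun i _ => waLocus_mul_self_apply (g i) (h i)
end

section
/- The square of W_0 has entries (W_0²)_{g,h} = ∏_{i=1}^n (m_i·δ_{g_i,0}·δ_{h_i,0} + (1 - δ_{g_i,0})·(1 - δ_{h_i,0})·(1 + δ_{g_i,h_i})). -/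
/-
W₀ is the tensor product of the one-coordinate matrices μ on `Fin mᵢ`, so its square is the
tensor product of the squares μ², and it suffices to compute (μ²)_{a,b} = ∑ₓ μ(a,x) μ(x,b).
If a = b = 0 every term is 1. If exactly one index, say b, is nonzero, μ(x,b) is 1 at x = 0,
-1 at x = b and 0 elsewhere, so the sum vanishes. If both are nonzero, the terms are 1 at x = 0,
1 at x = a = b, and 0 otherwise.
-/

def wronMu {m : ℕ} [NeZero m] (x y : Fin m) : ℤ :=
  if x = 0 ∨ y = 0 then 1 else if x = y then -1 else 0

def W0 {n : ℕ} (m : Fin n → ℕ) [∀ i, NeZero (m i)] :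
    Matrix (∀ i, Fin (m i)) (∀ i, Fin (m i)) ℤ :=
  fun g h => ∏ i, wronMu (g i) (h i)

namespace Matrix

variable {ι : Type*} [Fintype ι] {κ μ ν : ι → Type*} {R : Type*} [CommSemiring R]

def piKronecker (A : ∀ i, Matrix (κ i) (μ i) R) : Matrix (∀ i, κ i) (∀ i, μ i) R :=
  of fun g h => ∏ i, A i (g i) (h i)

@[simp]
theorem piKronecker_apply (A : ∀ i, Matrix (κ i) (μ i) R) (g : ∀ i, κ i) (h : ∀ i, μ i) :
    piKronecker A g h = ∏ i, A i (g i) (h i) :=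
  rfl

theorem piKronecker_mul [DecidableEq ι] [∀ i, Fintype (μ i)] (A : ∀ i, Matrix (κ i) (μ i) R)
    (B : ∀ i, Matrix (μ i) (ν i) R) :
    piKronecker A * piKronecker B = piKronecker fun i => A i * B i := by
  ext g h
  simp only [mul_apply, piKronecker_apply, Fintype.prod_sum, Finset.prod_mul_distrib]

end Matrix

section wronMu

variable {m : ℕ} [NeZero m]

@[simp]
theorem wronMu_zero_left (x : Fin m) : wronMu 0 x = 1 := by
  simp [wronMu]

@[simp]
theorem wronMu_zero_right (x : Fin m) : wronMu x 0 = 1 := by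
  simp [wronMu]

theorem wronMu_comm (x y : Fin m) : wronMu x y = wronMu y x := by
  unfold wronMu
  grind

theorem wronMu_of_right_ne_zero {b : Fin m} (hb : b ≠ 0) (x : Fin m) :
    wronMu x b = (if x = 0 then 1 else 0) - if x = b then 1 else 0 := by
  unfold wronMu
  grind

theorem sum_wronMu_of_right_ne_zero {b : Fin m} (hb : b ≠ 0) : ∑ x, wronMu x b = 0 := by
  simp [wronMu_of_right_ne_zero hb, Finset.sum_sub_distrib]

theorem wronMu_mul_wronMu_of_ne_zero {a b : Fin m} (ha : a ≠ 0) (hb : b ≠ 0) (x : Fin m) :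
    wronMu a x * wronMu x b = (if x = 0 then 1 else 0) + if x = a then kdel a b else 0 := by
  unfold wronMu kdel
  grind

theorem sum_wronMu_mul_wronMu (a b : Fin m) :
    ∑ x, wronMu a x * wronMu x b =
      (m : ℤ) * kdel a 0 * kdel b 0 + (1 - kdel a 0) * (1 - kdel b 0) * (1 + kdel a b) := by
  obtain rfl | ha := eq_or_ne a 0 <;> obtain rfl | hb := eq_or_ne b 0
  · simp [kdel]
  · simp [kdel, hb, sum_wronMu_of_right_ne_zero hb]
  · simp [kdel, ha, wronMu_comm a, sum_wronMu_of_right_ne_zero ha]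
  · simp [kdel, ha, hb, wronMu_mul_wronMu_of_ne_zero ha hb, Finset.sum_add_distrib]

end wronMu

theorem W0_eq_piKronecker {n : ℕ} (m : Fin n → ℕ) [∀ i, NeZero (m i)] :
    W0 m = Matrix.piKronecker fun i => Matrix.of (wronMu (m := m i)) :=
  rfl

theorem W0_sq_entries {n : ℕ} (m : Fin n → ℕ) [∀ i, NeZero (m i)]
    (g h : ∀ i, Fin (m i)) :
    (W0 m * W0 m) g h = ∏ i, ((m i : ℤ) * kdel (g i) 0 * kdel (h i) 0 +
      (1 - kdel (g i) 0) * (1 - kdel (h i) 0) * (1 + kdel (g i) (h i))) := by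
  rw [W0_eq_piKronecker, Matrix.piKronecker_mul, Matrix.piKronecker_apply]
  simp only [Matrix.mul_apply, Matrix.of_apply, sum_wronMu_mul_wronMu]
end

section
/- If two genotypes g and h have different degree (i.e. different numbers of nonzero coordinates), then (W_a²)_{g,h} = 0; equivalently, the columns of W_a indexed by g and h are orthogonal. -/
def deg {n : ℕ} {m : Fin n → ℕ} [∀ i, NeZero (m i)] (g : ∀ i, Fin (m i)) : ℕ :=
  (Finset.univ.filter fun i => g i ≠ 0).card

lemma wronOmega_comm {m : ℕ} [NeZero m] (x y : Fin m) :
    wronOmega x y = wronOmega y x := by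
  unfold wronOmega
  by_cases h : x = y
  · subst h; rfl
  · simp [h, Ne.symm h]

lemma wronOmega_zero_right {m : ℕ} [NeZero m] (x : Fin m) :
    wronOmega x 0 = 0 := by
  unfold wronOmega
  by_cases h : x = 0 <;> simp [h]

lemma sum_one_factor {m : ℕ} [NeZero m] (a : Fin m) (ha : a ≠ 0) :
    ∑ x : Fin m, (1 - (m : ℤ) * wronOmega x a) = 0 := by
  have key : ∀ x : Fin m, (1 - (m : ℤ) * wronOmega x a)
      = 1 - (m : ℤ) * (if x = a then (1:ℤ) else 0) := by
    intro x
    unfold wronOmega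
    by_cases hx : x = a
    · subst hx; simp [ha]
    · simp [hx]
  rw [Finset.sum_congr rfl fun x _ => key x, Finset.sum_sub_distrib,
    ← Finset.mul_sum, Finset.sum_ite_eq' Finset.univ a (fun _ => (1:ℤ))]
  simp [Finset.card_univ]

lemma factor_zero {m : ℕ} [NeZero m] (a b : Fin m)
    (hab : (a ≠ 0 ∧ b = 0) ∨ (a = 0 ∧ b ≠ 0)) :
    ∑ x : Fin m, (1 - (m : ℤ) * wronOmega x a) * (1 - (m : ℤ) * wronOmega x b) = 0 := by
  rcases hab with ⟨ha, hb⟩ | ⟨ha, hb⟩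
  · subst hb
    simp only [wronOmega_zero_right, mul_zero, sub_zero, mul_one]
    exact sum_one_factor a ha
  · subst ha
    simp only [wronOmega_zero_right, mul_zero, sub_zero, one_mul]
    exact sum_one_factor b hb

theorem Wa_sq_zero_of_deg_ne {n : ℕ} (m : Fin n → ℕ) [∀ i, NeZero (m i)]
    (g h : ∀ i, Fin (m i)) (hdeg : deg g ≠ deg h) :
    (Wa m * Wa m) g h = 0 ∧ ∑ x : ∀ i, Fin (m i), Wa m x g * Wa m x h = 0 := by
  -- find a coordinate where exactly one of g, h is zero
  have hex : ∃ i, (g i ≠ 0 ∧ h i = 0) ∨ (g i = 0 ∧ h i ≠ 0) := by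
    by_contra hc
    push_neg at hc
    apply hdeg
    unfold deg
    congr 1
    apply Finset.filter_congr
    intro i _
    obtain ⟨h1, h2⟩ := hc i
    constructor
    · intro hg; exact h1 hg
    · intro hh
      by_contra hg
      exact hh (h2 hg)
  obtain ⟨i₀, hi₀⟩ := hex
  have key : ∑ x : ∀ i, Fin (m i), Wa m x g * Wa m x h = 0 := by
    unfold Wa
    have : ∀ x : ∀ i, Fin (m i),
        (∏ i, (1 - (m i : ℤ) * wronOmega (x i) (g i))) *
        (∏ i, (1 - (m i : ℤ) * wronOmega (x i) (h i)))
        = ∏ i, ((1 - (m i : ℤ) * wronOmega (x i) (g i)) *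
            (1 - (m i : ℤ) * wronOmega (x i) (h i))) := by
      intro x; rw [← Finset.prod_mul_distrib]
    have hps := Fintype.prod_sum (fun i (j : Fin (m i)) =>
      (1 - (m i : ℤ) * wronOmega j (g i)) * (1 - (m i : ℤ) * wronOmega j (h i)))
    rw [Finset.sum_congr rfl fun x _ => this x, ← hps]
    exact Finset.prod_eq_zero (Finset.mem_univ i₀) (factor_zero _ _ hi₀)
  constructor
  · have hsym : ∀ x, Wa m g x = Wa m x g := by
      intro x
      unfold Wa
      exact Finset.prod_congr rfl fun i _ => by rw [wronOmega_comm]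
    calc (Wa m * Wa m) g h = ∑ x, Wa m g x * Wa m x h := rfl
      _ = ∑ x, Wa m x g * Wa m x h := by
          exact Finset.sum_congr rfl fun x _ => by rw [hsym]
      _ = 0 := key
  · exact key
end
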